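/- Let $g:\mathbb{R}^n\to\mathbb{R}^m$ be a piecewise linear function with associated polyhedra $P_1,\dots,P_T$ and matrices $A_1,\dots,A_T\in\mathbb{R}^{m\times n}$ such that $\mathbb{R}^n=\cup_{i=1}^{T}P_i$, each $P_i$ has nonempty interior, the interiors are pairwise disjoint, and $g(x)=A_ix$ for every $x\in P_i$. Then the Lipschitz constant of $g$ (with respect to Euclidean norms) equals the maximum operator norm of the pieces: $\|g\|_{\mathrm{Lip}}=\max_{i\in[T]}\|A_i\|_{\mathrm{op}}$. -/

import Mathlib

/-!
Near a point `x`, the finitely many closed pieces that miss `x` stay away from it, so every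
nearby `w` lies in a piece `P_i` containing `x`, and `g w - g x = A_i (w - x)`. Hence
`‖g w - g x‖ ≤ C ‖w - x‖` near every `x`, with `C = max_i ‖A_i‖_op`; a fencing argument for the
right Dini derivative of `t ↦ ‖g (x + t (y - x)) - g x‖` turns this local bound into a global
one. Conversely, on the interior of `P_i` the map `g` is linear with derivative `A_i`, and the
norm of a derivative is bounded by any Lipschitz constant.
-/

noncomputable section

open MeasureTheory ProbabilityTheory Finset Real

/-- Matrices as plain functions. -/
abbrev Mat (m k : ℕ) : Type := Fin m → Fin k → ℝ

/-- The ReLU activation `σ(t) = max (0, t)`. -/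
def relu (t : ℝ) : ℝ := max 0 t

/-- The derivative of ReLU, with the convention `σ'(0) = 0`. -/
def relu' (t : ℝ) : ℝ := if 0 < t then 1 else 0

/-- Squared Euclidean norm. -/
def sqnorm {m : ℕ} (x : Fin m → ℝ) : ℝ := ∑ i, (x i) ^ 2

/-- Euclidean norm. -/
def eunorm {m : ℕ} (x : Fin m → ℝ) : ℝ := Real.sqrt (sqnorm x)

/-- Feature maps of a ReLU network: `featureF n W x k = f_k(x)`, where `W l` is the
weight matrix mapping layer `l` to layer `l+1` (i.e. the paper's `W_{l+1}ᵀ`), and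
`n l` is the width of layer `l` (so `n 0 = d` is the input dimension). -/
def featureF (n : ℕ → ℕ) (W : ∀ l : ℕ, Mat (n l) (n (l+1))) (x : Fin (n 0) → ℝ) :
    (k : ℕ) → Fin (n k) → ℝ
  | 0 => x
  | (k+1) => fun j => relu (∑ i, W k i j * featureF n W x k i)

/-- Pre-activations: `preactF n W x k = g_{k+1}(x)`. -/
def preactF (n : ℕ → ℕ) (W : ∀ l : ℕ, Mat (n l) (n (l+1))) (x : Fin (n 0) → ℝ)
    (k : ℕ) : Fin (n (k+1)) → ℝ :=
  fun j => ∑ i, W k i j * featureF n W x k i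

/-- Zero-extension of a finite tuple of weight matrices to all layers. -/
def extW (n : ℕ → ℕ) (L : ℕ) (W : ∀ l : Fin L, Mat (n l) (n (l+1))) :
    ∀ l : ℕ, Mat (n l) (n (l+1)) :=
  fun l => if h : l < L then W ⟨l, h⟩ else fun _ _ => 0

/-- Backward vectors of the depth-`L` network: for `1 ≤ k ≤ L-1`,
`bvec n W x L k = Σ_k(x) (∏_{l=k+1}^{L-1} W_l Σ_l(x)) W_L ∈ ℝ^{n_k}`
(in the paper's indexing), and `bvec n W x L L` is the all-ones vector. -/
def bvec (n : ℕ → ℕ) (W : ∀ l : ℕ, Mat (n l) (n (l+1))) (x : Fin (n 0) → ℝ) (L : ℕ) :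
    (k : ℕ) → Fin (n k) → ℝ
  | 0 => fun _ => 0
  | (k+1) =>
    if _h : k + 1 < L then
      fun a => relu' (preactF n W x k a) * ∑ t, W (k+1) a t * bvec n W x L (k+2) t
    else fun _ => 1
termination_by k => L - k
decreasing_by omega

/-- `chain n W x k p = ∏_{l=k+1}^{p} W_l Σ_l(x)` (an `n_k × n_p` matrix, in the paper's
indexing), with `chain n W x k k` the identity. -/
def chain (n : ℕ → ℕ) (W : ∀ l : ℕ, Mat (n l) (n (l+1))) (x : Fin (n 0) → ℝ) (k : ℕ) :
    (p : ℕ) → Fin (n k) → Fin (n p) → ℝ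
  | 0 => fun i j => if h : k = 0 then (if Fin.cast (congrArg n h) i = j then 1 else 0) else 0
  | (p+1) =>
    if h : k = p + 1 then fun i j => if Fin.cast (congrArg n h) i = j then 1 else 0
    else fun i j => (∑ t, chain n W x k p i t * W p t j) * relu' (preactF n W x p j)

/-- The empirical NTK Gram matrix `J Jᵀ` of the depth-`L` network, where `J` is the
Jacobian of the network outputs with respect to all the weights, computed by
back-propagation with the convention `σ'(0) = 0`; in closed form,
`(JJᵀ)_{ij} = ∑_{k=0}^{L-1} ⟨f_k(x_i), f_k(x_j)⟩ ⟨B_{k+1}(x_i), B_{k+1}(x_j)⟩`. -/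
def ntkGram (n : ℕ → ℕ) (L : ℕ) (W : ∀ l : ℕ, Mat (n l) (n (l+1))) {N : ℕ}
    (X : Fin N → Fin (n 0) → ℝ) : Fin N → Fin N → ℝ :=
  fun i j => ∑ k ∈ Finset.range L,
    (∑ a, featureF n W (X i) k a * featureF n W (X j) k a) *
    (∑ t, bvec n W (X i) L (k+1) t * bvec n W (X j) L (k+1) t)

/-- Law of a random matrix with iid `N(0, v)` entries. -/
def gaussMat (m k : ℕ) (v : NNReal) : Measure (Mat m k) :=
  Measure.pi fun _ : Fin m => Measure.pi fun _ : Fin k => gaussianReal 0 v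

/-- Joint law of the first `L` weight matrices: `W l` (the paper's `W_{l+1}`) has iid
`N(0, (b (l+1))²)` entries, i.e. the paper's `W_l` has iid `N(0, (b l)²)` entries. -/
def weightLaw (n : ℕ → ℕ) (b : ℕ → NNReal) (L : ℕ) :
    Measure (∀ l : Fin L, Mat (n l) (n (l+1))) :=
  Measure.pi fun l : Fin L => gaussMat (n l) (n (l+1)) (b ((l : ℕ) + 1) ^ 2)

/-- The standard Gaussian measure on `ℝ^m`. -/
def stdGauss (m : ℕ) : Measure (Fin m → ℝ) :=
  Measure.pi fun _ : Fin m => gaussianReal 0 1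

/-- Quadratic form of a matrix. -/
def quadForm {N : ℕ} (M : Fin N → Fin N → ℝ) (v : Fin N → ℝ) : ℝ :=
  ∑ i, ∑ j, v i * M i j * v j

/-- The smallest eigenvalue of a symmetric matrix, as the infimum of its Rayleigh
quotient over unit vectors. -/
def lamMin {N : ℕ} (M : Fin N → Fin N → ℝ) : ℝ :=
  sInf {t : ℝ | ∃ v : Fin N → ℝ, sqnorm v = 1 ∧ t = quadForm M v}

/-- The operator norm (largest singular value) of a matrix, w.r.t. Euclidean norms. -/
def opNorm {m k : ℕ} (A : Fin m → Fin k → ℝ) : ℝ :=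
  sInf {c : ℝ | 0 ≤ c ∧ ∀ v : Fin k → ℝ, eunorm (fun i => ∑ j, A i j * v j) ≤ c * eunorm v}

/-- The Lipschitz constant of a map, w.r.t. Euclidean norms. -/
def lipC {m k : ℕ} (f : (Fin m → ℝ) → (Fin k → ℝ)) : ℝ :=
  sInf {c : ℝ | 0 ≤ c ∧ ∀ x y, eunorm (f x - f y) ≤ c * eunorm (x - y)}

/-- Data-scaling assumption (Assumption 2.1) with explicit constants:
`∫‖x‖ dP = Θ(√d)`, `∫‖x‖² dP = Θ(d)`, `∫‖x - E x‖² dP = Ω(d)`. -/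
def DataScaling (d : ℕ) (P : Measure (Fin d → ℝ)) (a1 a2 a3 a4 a5 : ℝ) : Prop :=
  a1 * Real.sqrt d ≤ (∫ x, eunorm x ∂P) ∧ (∫ x, eunorm x ∂P) ≤ a2 * Real.sqrt d ∧
  a3 * d ≤ (∫ x, sqnorm x ∂P) ∧ (∫ x, sqnorm x ∂P) ≤ a4 * d ∧
  a5 * d ≤ ∫ x, sqnorm (x - ∫ y, y ∂P) ∂P

/-- Lipschitz-concentration assumption (Assumption 2.2) with explicit constant `c`:
for every Lipschitz `f : ℝ^d → ℝ`, `P(|f(x) - E f| > t) ≤ 2 exp(-c t² / ‖f‖²_Lip)`. -/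
def LipConcentration {d : ℕ} (P : Measure (Fin d → ℝ)) (c : ℝ) : Prop :=
  ∀ (f : (Fin d → ℝ) → ℝ) (Λ : ℝ), 0 < Λ →
    (∀ x y, |f x - f y| ≤ Λ * eunorm (x - y)) →
    ∀ t : ℝ, 0 < t →
      (P {x | t < |f x - ∫ y, f y ∂P|}).toReal ≤ 2 * Real.exp (-(c * t ^ 2) / Λ ^ 2)

/-- The `r`-th Hermite coefficient of the ReLU function; for even `r ≥ 2` it is
`(1/√(2π)) (-1)^{(r-2)/2} (r-3)!! / √(r!)`. -/
def hermiteCoeffReLU (r : ℕ) : ℝ :=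
  if r = 0 then 1 / Real.sqrt (2 * Real.pi)
  else if r = 1 then 1 / 2
  else if Even r then
    (1 / Real.sqrt (2 * Real.pi)) * (-1 : ℝ) ^ ((r - 2) / 2) *
      (Nat.doubleFactorial (r - 3) : ℝ) / Real.sqrt (Nat.factorial r)
  else 0

/-- Minimum of `n` over `{a, …, b}`. -/
def minOver (n : ℕ → ℕ) (a b : ℕ) : ℕ := sInf (n '' Set.Icc a b)

/-- Minimum width among the layers `0, 1, …, k`. -/
def minWidth (n : ℕ → ℕ) (k : ℕ) : ℕ := minOver n 0 k

/-- A polyhedron: an intersection of finitely many closed half-spaces. -/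
def IsPolyhedron {m : ℕ} (P : Set (Fin m → ℝ)) : Prop :=
  ∃ (T : ℕ) (a : Fin T → Fin m → ℝ) (cc : Fin T → ℝ),
    P = {x | ∀ t, ∑ i, a t i * x i ≤ cc t}

open Filter Topology Set

section NormedSpace

variable {E F : Type*} [NormedAddCommGroup E] [NormedSpace ℝ E] [NormedAddCommGroup F]

theorem norm_sub_le_of_forall_eventually_norm_sub_le {f : E → F} {C : ℝ}
    (h : ∀ x, ∀ᶠ w in 𝓝 x, ‖f w - f x‖ ≤ C * ‖w - x‖) (x y : E) :
    ‖f x - f y‖ ≤ C * ‖x - y‖ := by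
  have hf : Continuous f := continuous_iff_continuousAt.2 fun x => by
    obtain ⟨r, hr, hball⟩ := Metric.eventually_nhds_iff.1 (h x)
    exact continuousAt_of_locally_lipschitz hr C fun w hw => by
      simpa only [dist_eq_norm] using hball hw
  set γ : ℝ → E := fun s => AffineMap.lineMap y x s
  have hγ : Continuous γ := AffineMap.lineMap_continuous
  have hγ_sub : ∀ s t, γ s - γ t = (s - t) • (x - y) := fun s t => by
    simp only [γ, AffineMap.lineMap_apply_module', sub_smul]; abel
  have hslope : ∀ t, ∀ᶠ s in 𝓝[>] t,
      slope (fun s => ‖f (γ s) - f y‖) t s ≤ C * ‖x - y‖ := fun t => by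
    have hnear := (hγ.tendsto t).eventually (h (γ t))
    filter_upwards [nhdsWithin_le_nhds hnear, self_mem_nhdsWithin] with s hs hts
    have hts : 0 < s - t := sub_pos.2 hts
    rw [slope_def_field, div_le_iff₀ hts]
    calc ‖f (γ s) - f y‖ - ‖f (γ t) - f y‖ ≤ ‖f (γ s) - f (γ t)‖ := by
          simpa using norm_sub_norm_le (f (γ s) - f y) (f (γ t) - f y)
      _ ≤ C * ‖γ s - γ t‖ := hs
      _ = C * ‖x - y‖ * (s - t) := by
          rw [hγ_sub, norm_smul, Real.norm_of_nonneg hts.le]; ring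
  have key := image_le_of_liminf_slope_right_le_deriv_boundary
    (f := fun s => ‖f (γ s) - f y‖) (a := 0) (b := 1)
    (B := fun s => C * ‖x - y‖ * s) (B' := fun _ => C * ‖x - y‖)
    (by fun_prop) (by simp [γ]) (by fun_prop)
    (fun t _ => (hasDerivWithinAt_id t _).const_mul _ |>.congr_deriv (mul_one _))
    (fun t _ r hr => ((hslope t).mono fun s hs => hs.trans_lt hr).frequently)
    (right_mem_Icc.2 zero_le_one)
  simpa [γ] using key

variable [NormedSpace ℝ F] {ι : Type*} [Finite ι]

theorem norm_sub_le_of_eqOn_closed_cover {P : ι → Set E} {L : ι → E →L[ℝ] F} {f : E → F}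
    {C : ℝ} (hclosed : ∀ i, IsClosed (P i)) (hcover : ⋃ i, P i = univ)
    (hf : ∀ i, ∀ x ∈ P i, f x = L i x) (hC : ∀ i, ‖L i‖ ≤ C) (x y : E) :
    ‖f x - f y‖ ≤ C * ‖x - y‖ := by
  refine norm_sub_le_of_forall_eventually_norm_sub_le (fun x => ?_) x y
  have hfar : (⋃ i ∈ {i | x ∉ P i}, P i)ᶜ ∈ 𝓝 x :=
    ((toFinite _).isClosed_biUnion fun i _ => hclosed i).isOpen_compl.mem_nhds
      (by simp only [mem_compl_iff, mem_iUnion₂]; exact fun ⟨i, hi, hxi⟩ => hi hxi)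
  filter_upwards [hfar] with w hw
  obtain ⟨i, hwi⟩ := mem_iUnion.1 (hcover ▸ mem_univ w)
  have hxi : x ∈ P i := by_contra fun hxi => hw (mem_biUnion hxi hwi)
  calc ‖f w - f x‖ = ‖L i (w - x)‖ := by rw [hf i w hwi, hf i x hxi, map_sub]
    _ ≤ ‖L i‖ * ‖w - x‖ := (L i).le_opNorm _
    _ ≤ C * ‖w - x‖ := by gcongr; exact hC i

theorem norm_le_of_eqOn_of_interior_nonempty {s : Set E} {L : E →L[ℝ] F} {f : E → F} {C : ℝ}
    (hs : (interior s).Nonempty) (hf : ∀ x ∈ s, f x = L x) (hC : 0 ≤ C)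
    (hlip : ∀ x y, ‖f x - f y‖ ≤ C * ‖x - y‖) : ‖L‖ ≤ C := by
  obtain ⟨z, hz⟩ := hs
  have hfL : f =ᶠ[𝓝 z] L := eventually_of_mem (mem_interior_iff_mem_nhds.1 hz) hf
  exact (L.hasFDerivAt.congr_of_eventuallyEq hfL).le_of_lip' hC
    (Eventually.of_forall fun x => hlip x z)

end NormedSpace

theorem eunorm_eq_norm_toLp {k : ℕ} (x : Fin k → ℝ) : eunorm x = ‖WithLp.toLp 2 x‖ := by
  simp [EuclideanSpace.norm_eq, eunorm, sqnorm]

theorem opNorm_eq_norm_toEuclideanLin {m k : ℕ} (A : Fin m → Fin k → ℝ) :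
    opNorm A = ‖(Matrix.toEuclideanLin (Matrix.of A)).toContinuousLinearMap‖ := by
  rw [ContinuousLinearMap.norm_def, opNorm]
  congr 1
  ext c
  refine and_congr_right' <| (WithLp.equiv 2 (Fin k → ℝ)).symm.forall_congr fun v => ?_
  simp only [eunorm_eq_norm_toLp]
  rfl

theorem IsPolyhedron.isClosed {k : ℕ} {P : Set (Fin k → ℝ)} (h : IsPolyhedron P) :
    IsClosed P := by
  obtain ⟨T, a, c, rfl⟩ := h
  simp only [ofPred_forall]
  exact isClosed_iInter fun t => isClosed_le (by fun_prop) continuous_const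

theorem pwl_lipschitz_eq_max_opnorm_general
    (nn m T : ℕ)
    (g : (Fin nn → ℝ) → (Fin m → ℝ))
    (Poly : Fin T → Set (Fin nn → ℝ))
    (A : Fin T → Fin m → Fin nn → ℝ)
    (hpoly : ∀ i, IsPolyhedron (Poly i))
    (hcover : (⋃ i, Poly i) = Set.univ)
    (hint : ∀ i, (interior (Poly i)).Nonempty)
    (hlin : ∀ i, ∀ x ∈ Poly i, ∀ j, g x j = ∑ a, A i j a * x a) :
    lipC g = ⨆ i, opNorm (A i) := by
  let e := PiLp.homeomorph 2 fun _ : Fin nn => ℝ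
  let G : EuclideanSpace ℝ (Fin nn) → EuclideanSpace ℝ (Fin m) :=
    fun x => WithLp.toLp 2 (g x.ofLp)
  let L i := (Matrix.toEuclideanLin (Matrix.of (A i))).toContinuousLinearMap
  have hGL : ∀ i, ∀ x ∈ e ⁻¹' Poly i, G x = L i x := fun i x hx => by
    ext j; exact hlin i _ hx j
  have hlip_iff : ∀ c, (∀ x y, eunorm (g x - g y) ≤ c * eunorm (x - y)) ↔
      ∀ x y, ‖G x - G y‖ ≤ c * ‖x - y‖ := fun c =>
    (WithLp.equiv 2 _).symm.forall_congr fun x => (WithLp.equiv 2 _).symm.forall_congr fun y => by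
      simp only [eunorm_eq_norm_toLp]; rfl
  simp only [opNorm_eq_norm_toEuclideanLin]
  refine IsLeast.csInf_eq ⟨⟨Real.iSup_nonneg fun i => norm_nonneg _, (hlip_iff _).2 ?_⟩, ?_⟩
  · exact norm_sub_le_of_eqOn_closed_cover (fun i => (hpoly i).isClosed.preimage e.continuous)
      (by rw [← preimage_iUnion, hcover, preimage_univ]) hGL
      (le_ciSup (finite_range _).bddAbove)
  · rintro c ⟨hc0, hc⟩
    refine Real.iSup_le (fun i => ?_) hc0
    refine norm_le_of_eqOn_of_interior_nonempty ?_ (hGL i) hc0 ((hlip_iff c).1 hc)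
    rw [← e.preimage_interior]
    exact (hint i).preimage e.surjective

/-- equation (19) in the proof of Lemma 6.1: the Lipschitz constant of
a piecewise linear map equals the largest operator norm of its pieces. If
`g : ℝ^n → ℝ^m` coincides with `x ↦ A_i x` on polyhedra `P_i` that cover `ℝ^n`, have
nonempty interiors, and have pairwise disjoint interiors, then
`‖g‖_Lip = max_{i∈[T]} ‖A_i‖_op` (Euclidean norms). -/
theorem pwl_lipschitz_eq_max_opnorm
    (nn m T : ℕ)
    (g : (Fin nn → ℝ) → (Fin m → ℝ))
    (Poly : Fin T → Set (Fin nn → ℝ))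
    (A : Fin T → Fin m → Fin nn → ℝ)
    (hpoly : ∀ i, IsPolyhedron (Poly i))
    (hcover : (⋃ i, Poly i) = Set.univ)
    (hint : ∀ i, (interior (Poly i)).Nonempty)
    (hdisj : ∀ i j, i ≠ j → interior (Poly i) ∩ interior (Poly j) = ∅)
    (hlin : ∀ i, ∀ x ∈ Poly i, ∀ j, g x j = ∑ a, A i j a * x a) :
    lipC g = ⨆ i, opNorm (A i) :=
  pwl_lipschitz_eq_max_opnorm_general nn m T g Poly A hpoly hcover hint hlin
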